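/- arXiv:1609.06151 — 2 statements merged into one kernel-verified Lean document; each statement's English description precedes it below -/
import Mathlib

section
/- Let Z denote the formal derivative on ℂ[x] and let He_n denote the n-th probabilists' Hermite polynomial (Mathlib's Polynomial.hermite, with coefficients mapped into ℂ). Then for every n ∈ ℕ: (i) e^{−Z²/2}(x^n) := Σ_{j≥0} (−1/2)^j Z^{2j}(x^n)/j! (a finite sum) equals He_n; (ii) He_n is an eigenfunction of the Hermite operator, (x·d/dx − d²/dx²)(He_n) = n·He_n; and (iii) the three-term recurrence x·He_n = He_{n+1} + n·He_{n−1} holds (with He_{−1} interpreted as 0). -/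
open Polynomial Finset

noncomputable section

/-- `Z`: the formal derivative on `ℂ[x]`. -/
def Zop : Module.End ℂ (Polynomial ℂ) := Polynomial.derivative

/-- The `n`-th probabilists' Hermite polynomial with coefficients in `ℂ`. -/
def hermiteC (n : ℕ) : Polynomial ℂ :=
  (Polynomial.hermite n).map (Int.castRingHom ℂ)

lemma hermiteC_zero : hermiteC 0 = 1 := by
  simp [hermiteC, Polynomial.hermite_zero]

lemma hermiteC_succ (n : ℕ) :
    hermiteC (n + 1) = X * hermiteC n - derivative (hermiteC n) := by
  simp only [hermiteC, Polynomial.hermite_succ, Polynomial.map_sub, Polynomial.map_mul,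
    Polynomial.map_X, Polynomial.derivative_map]

lemma iterate_derivative_X_mul (k : ℕ) (p : Polynomial ℂ) :
    derivative^[k + 1] (X * p) =
      X * derivative^[k + 1] p + ((k + 1 : ℕ) : ℂ) • derivative^[k] p := by
  induction k with
  | zero => simp [derivative_mul]; ring
  | succ k ih =>
      rw [Function.iterate_succ_apply', ih, derivative_add, derivative_mul, derivative_X,
        derivative_smul]
      rw [show derivative ((⇑derivative)^[k+1] p) = derivative^[k+1+1] p from
        (Function.iterate_succ_apply' _ _ _).symm,
        show derivative ((⇑derivative)^[k] p) = derivative^[k+1] p from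
        (Function.iterate_succ_apply' _ _ _).symm, one_mul]
      push_cast
      module

lemma derivative_hermiteC (n : ℕ) :
    derivative (hermiteC n) = (n : ℂ) • hermiteC (n - 1) := by
  induction n using Nat.twoStepInduction with
  | zero => simp [hermiteC_zero]
  | one =>
      simp [hermiteC_succ, hermiteC_zero]
  | more n ih1 ih2 =>
      have hx : X * hermiteC n = hermiteC (n + 1) + (n : ℂ) • hermiteC (n - 1) := by
        rw [hermiteC_succ n, ih1]; ring
      have h2 : derivative (hermiteC (n + 1)) = ((n : ℂ) + 1) • hermiteC n := by
        rw [ih2]; push_cast [Nat.add_sub_cancel]; rfl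
      rw [hermiteC_succ (n + 1), derivative_sub, derivative_mul, derivative_X, h2,
        mul_smul_comm, hx, derivative_smul, ih1, one_mul,
        show n + 2 - 1 = n + 1 from rfl]
      push_cast
      module


lemma Zop_pow_apply (k : ℕ) (p : Polynomial ℂ) :
    (Zop ^ k) p = derivative^[k] p :=
  Module.End.pow_apply _ k p

lemma expZ_eq_hermiteC (n : ℕ) :
    ∑ j ∈ range (n + 1),
        (((-1 : ℂ) / 2) ^ j / (j.factorial : ℂ)) • derivative^[2 * j] (X ^ n : Polynomial ℂ)
      = hermiteC n := by
  induction n with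
  | zero => simp [hermiteC_zero]
  | succ n ih =>
      have hterm : ∀ j : ℕ, derivative^[2 * j] ((X : Polynomial ℂ) ^ (n + 1)) =
          X * derivative^[2 * j] ((X : Polynomial ℂ) ^ n) +
            ((2 * j : ℕ) : ℂ) • derivative^[2 * j - 1] ((X : Polynomial ℂ) ^ n) := by
        intro j
        cases j with
        | zero => simp [pow_succ, mul_comm]
        | succ i =>
            rw [show 2 * (i + 1) = (2 * i + 1) + 1 by omega, pow_succ,
              mul_comm ((X : Polynomial ℂ) ^ n) X, iterate_derivative_X_mul,
              show (2 * i + 1) + 1 - 1 = 2 * i + 1 by omega]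
      have hsplit :
          ∑ j ∈ range (n + 1 + 1),
              (((-1 : ℂ) / 2) ^ j / (j.factorial : ℂ)) •
                derivative^[2 * j] ((X : Polynomial ℂ) ^ (n + 1))
            = (∑ j ∈ range (n + 1 + 1), (((-1 : ℂ) / 2) ^ j / (j.factorial : ℂ)) •
                (X * derivative^[2 * j] ((X : Polynomial ℂ) ^ n)))
              + ∑ j ∈ range (n + 1 + 1), (((-1 : ℂ) / 2) ^ j / (j.factorial : ℂ)) •
                  (((2 * j : ℕ) : ℂ) • derivative^[2 * j - 1] ((X : Polynomial ℂ) ^ n)) := by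
        rw [← Finset.sum_add_distrib]
        exact Finset.sum_congr rfl fun j _ => by rw [hterm j, smul_add]
      have hA : (∑ j ∈ range (n + 1 + 1), (((-1 : ℂ) / 2) ^ j / (j.factorial : ℂ)) •
          (X * derivative^[2 * j] ((X : Polynomial ℂ) ^ n))) = X * hermiteC n := by
        simp only [← mul_smul_comm]
        rw [← Finset.mul_sum, Finset.sum_range_succ,
          iterate_derivative_eq_zero
            (show (X ^ n : Polynomial ℂ).natDegree < 2 * (n + 1) by
              rw [natDegree_X_pow]; omega),
          smul_zero, add_zero, ih]
      have hc : ∀ i : ℕ,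
          ((-1 : ℂ) / 2) ^ (i + 1) / (((i + 1).factorial : ℕ) : ℂ) * ((2 * (i + 1) : ℕ) : ℂ)
            = -(((-1 : ℂ) / 2) ^ i / ((i.factorial : ℕ) : ℂ)) := by
        intro i
        have h1 : ((i.factorial : ℕ) : ℂ) ≠ 0 := Nat.cast_ne_zero.mpr i.factorial_ne_zero
        have h2 : ((i : ℂ) + 1) ≠ 0 := Nat.cast_add_one_ne_zero i
        rw [Nat.factorial_succ]
        push_cast
        field_simp
        ring
      have hB : (∑ j ∈ range (n + 1 + 1), (((-1 : ℂ) / 2) ^ j / (j.factorial : ℂ)) •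
            (((2 * j : ℕ) : ℂ) • derivative^[2 * j - 1] ((X : Polynomial ℂ) ^ n)))
          = -derivative (hermiteC n) := by
        rw [Finset.sum_range_succ']
        have h0 : (((-1 : ℂ) / 2) ^ 0 / ((0).factorial : ℂ)) •
            (((2 * 0 : ℕ) : ℂ) • derivative^[2 * 0 - 1] ((X : Polynomial ℂ) ^ n)) = 0 := by
          norm_num
        rw [h0, add_zero]
        have hcongr : ∀ i ∈ range (n + 1),
            (((-1 : ℂ) / 2) ^ (i + 1) / ((i + 1).factorial : ℂ)) •
              (((2 * (i + 1) : ℕ) : ℂ) • derivative^[2 * (i + 1) - 1] ((X : Polynomial ℂ) ^ n))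
            = -((((-1 : ℂ) / 2) ^ i / (i.factorial : ℂ)) •
                derivative (derivative^[2 * i] ((X : Polynomial ℂ) ^ n))) := by
          intro i _
          rw [smul_smul, hc i, show 2 * (i + 1) - 1 = 2 * i + 1 by omega,
            Function.iterate_succ_apply', neg_smul]
        rw [Finset.sum_congr rfl hcongr, Finset.sum_neg_distrib]
        rw [← ih, derivative_sum]
        exact congrArg Neg.neg (Finset.sum_congr rfl fun i _ => (derivative_smul _ _).symm)
      rw [hsplit, hA, hB, hermiteC_succ]
      ring

/-- Probabilists' Hermite polynomials: the exponential formula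
`He_n = e^{−Z²/2}(x^n)` (a finite sum), the Hermite differential equation, and
the three-term recurrence. -/
theorem hermite_bochner :
    (∀ n : ℕ,
      (∀ j : ℕ, n < 2 * j → (Zop ^ (2 * j)) (X ^ n : Polynomial ℂ) = 0) ∧
      ∑ j ∈ range (n + 1),
          (((-1 : ℂ) / 2) ^ j / (j.factorial : ℂ)) • (Zop ^ (2 * j)) (X ^ n : Polynomial ℂ)
        = hermiteC n) ∧
    (∀ n : ℕ,
      X * derivative (hermiteC n) - derivative (derivative (hermiteC n))
        = (n : ℂ) • hermiteC n) ∧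
    (∀ n : ℕ,
      X * hermiteC n = hermiteC (n + 1) + (n : ℂ) • hermiteC (n - 1)) := by
  refine ⟨fun n => ⟨fun j hj => ?_, ?_⟩, fun n => ?_, fun n => ?_⟩
  · rw [Zop_pow_apply]
    exact iterate_derivative_eq_zero (by rw [natDegree_X_pow]; omega)
  · simp only [Zop_pow_apply]
    exact expZ_eq_hermiteC n
  · cases n with
    | zero => simp [hermiteC_zero]
    | succ m =>
        rw [derivative_hermiteC (m + 1), Nat.add_sub_cancel, mul_smul_comm,
          derivative_smul, ← smul_sub, ← hermiteC_succ m]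
  · rw [hermiteC_succ n, derivative_hermiteC n]
    ring

end
end

section
/- Let Z denote the formal derivative on ℂ[x], fix an integer l ≥ 2, and set P_n = e^{−Z^l/l}(x^n) := Σ_{j≥0} (−1/l)^j Z^{lj}(x^n)/j! (a finite sum) for n ∈ ℕ, with the convention P_m = 0 for m < 0. Then: (i) P_n is an eigenfunction of the operator L = x·d/dx − d^l/dx^l with L(P_n) = n·P_n; and (ii) the (l+1)-term recurrence x·P_n = P_{n+1} + n(n−1)⋯(n−l+2)·P_{n−l+1} holds, where the coefficient is the product of the l−1 factors n, n−1, …, n−l+2 (and vanishes when n < l−1). For l = 2 these are the probabilists' Hermite polynomials. -/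
open Polynomial Finset

noncomputable section

/-- `P_n = e^{−Z^l/l}(x^n)`, the exponential series being a finite sum
(all terms with `l·j > n` vanish). -/
def Pl (l n : ℕ) : Polynomial ℂ :=
  ∑ j ∈ range (n + 1),
    (((-1 : ℂ) / (l : ℂ)) ^ j / (j.factorial : ℂ)) • (Zop ^ (l * j)) (X ^ n : Polynomial ℂ)

/-- `P_m` extended to integer indices by `P_m = 0` for `m < 0`. -/
def Plz (l : ℕ) (m : ℤ) : Polynomial ℂ :=
  if m < 0 then 0 else Pl l m.toNat

def cl (l j : ℕ) : ℂ := ((-1 : ℂ) / (l : ℂ)) ^ j / (j.factorial : ℂ)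

lemma Pl_def (l n : ℕ) :
    Pl l n = ∑ j ∈ range (n + 1), cl l j • (Zop ^ (l * j)) (X ^ n : Polynomial ℂ) := rfl

lemma Zop_pow_Xpow (m n : ℕ) :
    (Zop ^ m) (X ^ n : Polynomial ℂ) = (n.descFactorial m : ℂ) • X ^ (n - m) := by
  rw [Module.End.pow_apply]
  exact Polynomial.iterate_derivative_X_pow_eq_smul n m

lemma Zop_mul_X (p : Polynomial ℂ) : Zop (X * p) = X * Zop p + p := by
  show derivative (X * p) = X * derivative p + p
  rw [derivative_mul, derivative_X]; ring

lemma Zop_pow_mul_X (m : ℕ) (p : Polynomial ℂ) :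
    (Zop ^ m) (X * p) = X * (Zop ^ m) p + (m : ℂ) • (Zop ^ (m - 1)) p := by
  induction m generalizing p with
  | zero => simp
  | succ m ih =>
    rw [pow_succ', Module.End.mul_apply, Module.End.mul_apply, ih p, map_add, map_smul,
      Zop_mul_X]
    rcases m with _ | k
    · simp
    · have h2 : Zop ((Zop ^ (k + 1 - 1)) p) = (Zop ^ (k + 1)) p := by
        rw [Nat.add_sub_cancel, ← Module.End.mul_apply, ← pow_succ']
      rw [h2]
      push_cast
      module

lemma Pl_eq_sum (l : ℕ) (hl : 1 ≤ l) {n N : ℕ} (h : n ≤ N) :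
    ∑ j ∈ range (N + 1), cl l j • (Zop ^ (l * j)) (X ^ n : Polynomial ℂ) = Pl l n := by
  rw [Pl_def]
  refine (Finset.sum_subset (Finset.range_subset_range.2 (by omega)) fun j hj hj' => ?_).symm
  have hjn : n < j := by simp only [mem_range] at hj hj'; omega
  have hlt : n < l * j := by nlinarith
  rw [Zop_pow_Xpow, Nat.descFactorial_of_lt hlt, Nat.cast_zero, zero_smul, smul_zero]

lemma cl_succ (l : ℕ) (hl : 2 ≤ l) (j : ℕ) :
    cl l (j + 1) * ((l * (j + 1) : ℕ) : ℂ) = - cl l j := by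
  have hl0 : (l : ℂ) ≠ 0 := Nat.cast_ne_zero.2 (by omega)
  have hf : (j.factorial : ℂ) ≠ 0 := Nat.cast_ne_zero.2 j.factorial_ne_zero
  have hj1 : ((j : ℂ) + 1) ≠ 0 := Nat.cast_add_one_ne_zero j
  simp only [cl, pow_succ, Nat.factorial_succ]
  push_cast
  field_simp

lemma keyRec (l : ℕ) (hl : 2 ≤ l) (n : ℕ) :
    Pl l (n + 1) = X * Pl l n - ((n.descFactorial (l - 1) : ℂ)) • Pl l (n - (l - 1)) := by
  have hl1 : 1 ≤ l := by omega
  rw [Pl_def l (n + 1)]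
  have hX : (X : Polynomial ℂ) ^ (n + 1) = X * X ^ n := by ring
  have step1 : ∀ j, cl l j • (Zop ^ (l * j)) ((X : Polynomial ℂ) ^ (n + 1))
      = cl l j • (X * (Zop ^ (l * j)) (X ^ n))
        + (cl l j * ((l * j : ℕ) : ℂ)) • (Zop ^ (l * j - 1)) (X ^ n) := by
    intro j
    rw [hX, Zop_pow_mul_X, smul_add, smul_smul]
  calc ∑ j ∈ range (n + 1 + 1), cl l j • (Zop ^ (l * j)) ((X : Polynomial ℂ) ^ (n + 1))
      = (∑ j ∈ range (n + 1 + 1), cl l j • (X * (Zop ^ (l * j)) (X ^ n)))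
        + ∑ j ∈ range (n + 1 + 1), (cl l j * ((l * j : ℕ) : ℂ)) • (Zop ^ (l * j - 1)) (X ^ n) := by
        rw [← sum_add_distrib]; exact sum_congr rfl fun j _ => step1 j
    _ = X * Pl l n
        + ∑ j ∈ range (n + 1 + 1), (cl l j * ((l * j : ℕ) : ℂ)) • (Zop ^ (l * j - 1)) (X ^ n) := by
        congr 1
        rw [← Pl_eq_sum l hl1 (Nat.le_succ n), mul_sum]
        exact sum_congr rfl fun j _ => (mul_smul_comm _ _ _).symm
    _ = X * Pl l n - ((n.descFactorial (l - 1) : ℂ)) • Pl l (n - (l - 1)) := by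
        congr 1
        rw [Finset.sum_range_succ']
        have h0 : (cl l 0 * ((l * 0 : ℕ) : ℂ)) • (Zop ^ (l * 0 - 1)) ((X : Polynomial ℂ) ^ n) = 0 := by
          simp
        rw [h0, add_zero]
        have hterm : ∀ j, (cl l (j + 1) * ((l * (j + 1) : ℕ) : ℂ)) • (Zop ^ (l * (j + 1) - 1)) ((X : Polynomial ℂ) ^ n)
            = (- (n.descFactorial (l - 1) : ℂ)) • (cl l j • (Zop ^ (l * j)) ((X : Polynomial ℂ) ^ (n - (l - 1)))) := by
          intro j
          have hexp : l * (j + 1) - 1 = l * j + (l - 1) := by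
            have := Nat.mul_le_mul_left j hl1
            cases l with
            | zero => omega
            | succ k => ring_nf; omega
          rw [cl_succ l hl, hexp, pow_add, Module.End.mul_apply, Zop_pow_Xpow (l - 1) n,
            map_smul, smul_smul, smul_smul]
          ring_nf
        rw [sum_congr rfl fun j _ => hterm j, ← smul_sum, Pl_eq_sum l hl1 (Nat.sub_le n (l - 1))]
        module

lemma Zop_comm_pow (m : ℕ) (p : Polynomial ℂ) : (Zop ^ m) (Zop p) = Zop ((Zop ^ m) p) := by
  rw [← Module.End.mul_apply, ← pow_succ, pow_succ', Module.End.mul_apply]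

lemma derivative_Pl (l : ℕ) (hl : 2 ≤ l) (n : ℕ) :
    derivative (Pl l n) = (n : ℂ) • Pl l (n - 1) := by
  have hd : ∀ q : Polynomial ℂ, derivative q = Zop q := fun _ => rfl
  rcases n with _ | m
  · have h1 : Pl l 0 = 1 := by simp [Pl_def, cl]
    rw [h1, Nat.cast_zero, zero_smul, derivative_one]
  · rw [Pl_def, hd, map_sum]
    have : ∀ j, Zop (cl l j • (Zop ^ (l * j)) ((X:Polynomial ℂ) ^ (m+1)))
        = ((m+1:ℕ) : ℂ) • (cl l j • (Zop ^ (l * j)) ((X:Polynomial ℂ) ^ m)) := by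
      intro j
      rw [map_smul, ← Zop_comm_pow]
      have : Zop ((X:Polynomial ℂ) ^ (m+1)) = ((m+1:ℕ) : ℂ) • (X:Polynomial ℂ) ^ m := by
        show derivative ((X:Polynomial ℂ) ^ (m+1)) = _
        rw [derivative_X_pow, smul_eq_C_mul]
        push_cast; ring_nf
      rw [this, map_smul, smul_comm]
    rw [sum_congr rfl fun j _ => this j, ← smul_sum, Pl_eq_sum l (by omega) (Nat.le_succ m)]
    norm_num

lemma Zop_pow_Pl (l : ℕ) (hl : 2 ≤ l) (n : ℕ) :
    (Zop ^ l) (Pl l n) = (n.descFactorial l : ℂ) • Pl l (n - l) := by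
  rw [Pl_def, map_sum]
  have : ∀ j, (Zop ^ l) (cl l j • (Zop ^ (l * j)) ((X:Polynomial ℂ) ^ n))
      = (n.descFactorial l : ℂ) • (cl l j • (Zop ^ (l * j)) ((X:Polynomial ℂ) ^ (n - l))) := by
    intro j
    rw [map_smul, ← Module.End.mul_apply, ← pow_add]
    have he : l + l * j = l * j + l := by ring
    rw [he, pow_add, Module.End.mul_apply, Zop_pow_Xpow l n, map_smul, smul_comm]
  rw [sum_congr rfl fun j _ => this j, ← smul_sum, Pl_eq_sum l (by omega) (Nat.sub_le n l)]

lemma eigen (l : ℕ) (hl : 2 ≤ l) (n : ℕ) :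
    X * derivative (Pl l n) - (Zop ^ l) (Pl l n) = (n : ℂ) • Pl l n := by
  rw [derivative_Pl l hl, Zop_pow_Pl l hl]
  rcases n with _ | m
  · simp [Nat.descFactorial_of_lt (show 0 < l by omega)]
  · have hrec := keyRec l hl m
    have h1 : m + 1 - 1 = m := rfl
    have h2 : m - (l - 1) = m + 1 - l := by omega
    have h3 : (m+1).descFactorial l = (m+1) * m.descFactorial (l - 1) := by
      rcases l with _ | k
      · omega
      · simpa using Nat.succ_descFactorial_succ m k
    rw [h1, mul_smul_comm, hrec, h2, h3]
    push_cast
    module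

lemma Pl_zero (l : ℕ) : Pl l 0 = 1 := by simp [Pl_def, cl]

lemma Pl_one (l : ℕ) (hl : 2 ≤ l) : Pl l 1 = X := by
  rw [Pl_def, Finset.sum_range_succ, Finset.sum_range_one]
  have h1 : (Zop ^ l) (X : Polynomial ℂ) = 0 := by
    rw [← pow_one (X : Polynomial ℂ), Zop_pow_Xpow, Nat.descFactorial_of_lt (by omega)]; simp
  simp [cl, h1]

lemma prod_cast_descFactorial (n m : ℕ) :
    ∏ k ∈ range m, ((n : ℂ) - (k : ℂ)) = (n.descFactorial m : ℂ) := by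
  induction m with
  | zero => simp
  | succ m ih =>
    rw [prod_range_succ, ih, Nat.descFactorial_succ]
    rcases le_or_gt m n with h | h
    · push_cast [Nat.cast_sub h]; ring
    · rw [Nat.descFactorial_of_lt h]; simp

lemma deriv_hermite (n : ℕ) :
    derivative (hermite n) = (n : Polynomial ℤ) * hermite (n - 1) := by
  induction n with
  | zero => simp [hermite_zero]
  | succ n ih =>
    rw [hermite_succ, derivative_sub, derivative_mul, derivative_X, one_mul, ih,
      derivative_mul, derivative_natCast, zero_mul, zero_add]
    rcases n with _ | m
    · simp [hermite_zero]
    · have h : X * hermite m - derivative (hermite m) = hermite (m + 1) := (hermite_succ m).symm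
      rw [show (m + 1) - 1 = m from rfl, show (m + 1 + 1) - 1 = m + 1 from rfl]
      push_cast
      linear_combination ((m : Polynomial ℤ) + 1) * h

lemma hermiteC_succ_succ (n : ℕ) :
    hermiteC (n + 1 + 1) = X * hermiteC (n + 1) - ((n : ℂ) + 1) • hermiteC n := by
  unfold hermiteC
  rw [hermite_succ (n + 1), Polynomial.map_sub, Polynomial.map_mul, map_X, deriv_hermite,
    Polynomial.map_mul]
  rw [show (n + 1) - 1 = n from rfl]
  push_cast
  rw [smul_eq_C_mul]
  simp only [Polynomial.map_add, Polynomial.map_one, Polynomial.map_natCast, Polynomial.C_add,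
    Polynomial.C_1, Polynomial.C_eq_natCast]

/-- The generalized Hermite (Gould–Hopper-type) polynomials `P_n = e^{−Z^l/l}(x^n)`:
eigenfunction property for `L = x·d/dx − d^l/dx^l`, the `(l+1)`-term recurrence,
and the identification with probabilists' Hermite polynomials for `l = 2`. -/
theorem gould_hopper_type (l : ℕ) (hl : 2 ≤ l) :
    (∀ n : ℕ,
      X * derivative (Pl l n) - (Zop ^ l) (Pl l n) = (n : ℂ) • Pl l n) ∧
    (∀ n : ℕ,
      X * Plz l n
        = Plz l (n + 1) + (∏ k ∈ range (l - 1), ((n : ℂ) - (k : ℂ))) • Plz l ((n : ℤ) - l + 1)) ∧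
    (l = 2 → ∀ n : ℕ, Pl l n = hermiteC n) := by
  refine ⟨fun n => eigen l hl n, fun n => ?_, ?_⟩
  · have hPn : Plz l (n : ℤ) = Pl l n := by simp [Plz]
    have hPn1 : Plz l ((n : ℤ) + 1) = Pl l (n + 1) := by
      have h : (n : ℤ) + 1 = ((n + 1 : ℕ) : ℤ) := by push_cast; ring
      rw [h, Plz, if_neg (by omega), Int.toNat_natCast]
    rw [hPn, hPn1, prod_cast_descFactorial n (l - 1)]
    rcases lt_or_ge n (l - 1) with h | h
    · have hz : Plz l ((n : ℤ) - l + 1) = 0 := by rw [Plz, if_pos (by omega)]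
      rw [hz, smul_zero, add_zero, keyRec l hl n, Nat.descFactorial_of_lt h]
      simp
    · have hz : Plz l ((n : ℤ) - l + 1) = Pl l (n - (l - 1)) := by
        rw [Plz, if_neg (by omega)]
        congr 1
        omega
      rw [hz, keyRec l hl n]
      module
  · rintro rfl n
    suffices h : ∀ m, Pl 2 m = hermiteC m ∧ Pl 2 (m + 1) = hermiteC (m + 1) from (h n).1
    intro m
    induction m with
    | zero =>
      constructor
      · rw [Pl_zero]; unfold hermiteC; rw [hermite_zero]; simp
      · rw [Pl_one 2 le_rfl]; unfold hermiteC; rw [hermite_one]; simp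
    | succ m ih =>
      refine ⟨ih.2, ?_⟩
      have hk := keyRec 2 le_rfl (m + 1)
      rw [show (2 : ℕ) - 1 = 1 from rfl, Nat.descFactorial_one,
        show (m + 1) - 1 = m from rfl, ih.1, ih.2] at hk
      rw [hk, hermiteC_succ_succ m]
      push_cast
      module

end
end
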